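/- arXiv:1901.00754 — 4 statements merged into one kernel-verified Lean document; each statement's English description precedes it below -/
import Mathlib

section
/- Let D and E be finite sets with |D|, |E| ≥ 2 and let P : D × E → {0,1} be a binary predicate. Suppose there exist two-element subsets B ⊆ D and C ⊆ E such that P|_{B×C} is a singleton. Then for every n ≥ 1 the following two-sorted CSP(P) instance I has 2n variables and n² constraints and the property that for every 0 < ε < 1 every ε-sparsifier of I contains all n² constraints: the variable set is X ⊔ Y with |X| = |Y| = n, the scope set is all n² pairs (x, y) with x ∈ X, y ∈ Y, and the weights are arbitrary positive reals. -/
/-!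
Fix a scope `(x, y)` of the complete bipartite instance and let `P` restricted to
`{b₀, b₁} × {c₀, c₁}` be the indicator of `(b₀, c₀)`. The assignment sending `x` to `b₀`,
`y` to `c₀`, and every other variable to `b₁` resp. `c₁` satisfies the constraint on
`(x, y)` and no other one. Its value is therefore `w (x, y) > 0` on the instance but `0`
on any subinstance omitting `(x, y)`, which violates the lower sparsifier bound.
-/

/-- Extension of a two-sorted predicate `P : D × E → {0,1}` to the union
domain `D ⊕ E`: it evaluates `P` on pairs whose first component is a
`D`-label and second component is an `E`-label, and is `0` elsewhere. -/
def pext {D E : Type*} (P : D → E → Bool) : D ⊕ E → D ⊕ E → Bool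
  | Sum.inl d, Sum.inr e => P d e
  | _, _ => false

/-- The value of a binary CSP instance with predicate `P`, scope set `S`,
weights `w`, under assignment `A`. -/
def cspVal {W D : Type*} (P : D → D → Bool) (S : Finset (W × W)) (w : W × W → ℝ)
    (A : W → D) : ℝ :=
  ∑ e ∈ S, w e * (if P (A e.1) (A e.2) then 1 else 0)

open Finset

section Sparsifier

variable {W R : Type*} (P : R → R → Bool)

theorem cspVal_eq_ite_of_forall_iff [DecidableEq W] {S : Finset (W × W)} {w : W × W → ℝ}
    {A : W → R} {e : W × W} (hA : ∀ f ∈ S, P (A f.1) (A f.2) = true ↔ f = e) :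
    cspVal P S w A = if e ∈ S then w e else 0 := by
  rw [cspVal, ← sum_ite_eq' S e w]
  exact sum_congr rfl fun f hf => by simp [hA f hf]

theorem mem_of_lower_bound_of_forall_iff {S S' : Finset (W × W)} {w w' : W × W → ℝ}
    {A : W → R} {e : W × W} {ε : ℝ} (hε : ε < 1) (hsub : S' ⊆ S) (he : e ∈ S)
    (hwe : 0 < w e) (hA : ∀ f ∈ S, P (A f.1) (A f.2) = true ↔ f = e)
    (hlow : (1 - ε) * cspVal P S w A ≤ cspVal P S' w' A) : e ∈ S' := by
  classical
  by_contra he'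
  rw [cspVal_eq_ite_of_forall_iff P hA, cspVal_eq_ite_of_forall_iff P fun f hf => hA f (hsub hf),
    if_pos he, if_neg he'] at hlow
  linarith [mul_pos (sub_pos.2 hε) hwe]

end Sparsifier

section CompleteBipartite

def bipartiteScopes (X Y : Type*) [Fintype X] [Fintype Y] [DecidableEq (X ⊕ Y)] :
    Finset ((X ⊕ Y) × (X ⊕ Y)) :=
  univ.image fun p : X × Y => (Sum.inl p.1, Sum.inr p.2)

variable {X Y D E : Type*} [Fintype X] [Fintype Y] [DecidableEq (X ⊕ Y)]

theorem mem_bipartiteScopes {e : (X ⊕ Y) × (X ⊕ Y)} :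
    e ∈ bipartiteScopes X Y ↔ ∃ x y, e = (Sum.inl x, Sum.inr y) := by
  simp [bipartiteScopes, eq_comm]

theorem card_bipartiteScopes :
    (bipartiteScopes X Y).card = Fintype.card X * Fintype.card Y := by
  rw [bipartiteScopes, card_image_of_injective _ fun p q h => by
    simpa [Prod.ext_iff] using h]
  simp

variable [DecidableEq X] [DecidableEq Y]

def pointAssignment (b₀ b₁ : D) (c₀ c₁ : E) (x : X) (y : Y) : X ⊕ Y → D ⊕ E :=
  Sum.elim (fun k => Sum.inl (if k = x then b₀ else b₁))
    (fun l => Sum.inr (if l = y then c₀ else c₁))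

theorem pointAssignment_valid (b₀ b₁ : D) (c₀ c₁ : E) (x : X) (y : Y) :
    ∀ e ∈ bipartiteScopes X Y,
      (∃ d, pointAssignment b₀ b₁ c₀ c₁ x y e.1 = Sum.inl d) ∧
      ∃ c, pointAssignment b₀ b₁ c₀ c₁ x y e.2 = Sum.inr c := by
  intro e he
  obtain ⟨k, l, rfl⟩ := mem_bipartiteScopes.1 he
  exact ⟨⟨_, rfl⟩, _, rfl⟩

theorem pext_pointAssignment_eq_true_iff {P : D → E → Bool} {b₀ b₁ : D} {c₀ c₁ : E}
    (h₀₀ : P b₀ c₀ = true) (h₀₁ : P b₀ c₁ = false) (h₁₀ : P b₁ c₀ = false)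
    (h₁₁ : P b₁ c₁ = false) (x : X) (y : Y) :
    ∀ e ∈ bipartiteScopes X Y,
      pext P (pointAssignment b₀ b₁ c₀ c₁ x y e.1) (pointAssignment b₀ b₁ c₀ c₁ x y e.2)
        = true ↔ e = (Sum.inl x, Sum.inr y) := by
  intro e he
  obtain ⟨k, l, rfl⟩ := mem_bipartiteScopes.1 he
  by_cases hk : k = x <;> by_cases hl : l = y <;> simp [pointAssignment, pext, *]

end CompleteBipartite

theorem exists_indicator_of_existsUnique {D E : Type*} {P : D → E → Bool} {B : Finset D}
    {C : Finset E} (hB : 1 < B.card) (hC : 1 < C.card)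
    (hsing : ∃! p : D × E, p.1 ∈ B ∧ p.2 ∈ C ∧ P p.1 p.2 = true) :
    ∃ b₀ b₁ c₀ c₁, P b₀ c₀ = true ∧ P b₀ c₁ = false ∧ P b₁ c₀ = false ∧ P b₁ c₁ = false := by
  obtain ⟨⟨b₀, c₀⟩, ⟨hb₀, hc₀, h₀₀⟩, huniq⟩ := hsing
  obtain ⟨b₁, hb₁, hb₁₀⟩ := exists_mem_ne hB b₀
  obtain ⟨c₁, hc₁, hc₁₀⟩ := exists_mem_ne hC c₀
  have hfalse : ∀ b ∈ B, ∀ c ∈ C, (b, c) ≠ (b₀, c₀) → P b c = false := fun b hb c hc hne =>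
    Bool.not_eq_true _ ▸ fun h => hne (huniq (b, c) ⟨hb, hc, h⟩)
  exact ⟨b₀, b₁, c₀, c₁, h₀₀, hfalse _ hb₀ _ hc₁ (by simp [hc₁₀]),
    hfalse _ hb₁ _ hc₀ (by simp [hb₁₀]), hfalse _ hb₁ _ hc₁ (by simp [hb₁₀])⟩

theorem stmt6_general {D E : Type}
    (P : D → E → Bool)
    (B : Finset D) (C : Finset E) (hB : B.card = 2) (hC : C.card = 2)
    (hsing : ∃! p : D × E, p.1 ∈ B ∧ p.2 ∈ C ∧ P p.1 p.2 = true)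
    (n : ℕ)
    (S : Finset ((Fin n ⊕ Fin n) × (Fin n ⊕ Fin n)))
    (hS : S = (Finset.univ : Finset (Fin n × Fin n)).image
      (fun p => (Sum.inl p.1, Sum.inr p.2)))
    (w : (Fin n ⊕ Fin n) × (Fin n ⊕ Fin n) → ℝ)
    (hw : ∀ e ∈ S, 0 < w e) :
    Fintype.card (Fin n ⊕ Fin n) = 2 * n ∧ S.card = n ^ 2 ∧
    ∀ ε : ℝ, 0 < ε → ε < 1 →
      ∀ (S' : Finset ((Fin n ⊕ Fin n) × (Fin n ⊕ Fin n)))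
        (w' : (Fin n ⊕ Fin n) × (Fin n ⊕ Fin n) → ℝ),
        S' ⊆ S → (∀ e ∈ S', 0 < w' e) →
        (∀ A : (Fin n ⊕ Fin n) → D ⊕ E,
          (∀ e ∈ S, (∃ d, A e.1 = Sum.inl d) ∧ (∃ x, A e.2 = Sum.inr x)) →
          (1 - ε) * cspVal (pext P) S w A ≤ cspVal (pext P) S' w' A ∧
          cspVal (pext P) S' w' A ≤ (1 + ε) * cspVal (pext P) S w A) →
        S' = S := by
  change S = bipartiteScopes (Fin n) (Fin n) at hS
  subst hS
  refine ⟨by simp [two_mul], by simp [card_bipartiteScopes, sq], ?_⟩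
  intro ε _ hε S' w' hsub _ hsparse
  obtain ⟨b₀, b₁, c₀, c₁, h₀₀, h₀₁, h₁₀, h₁₁⟩ :=
    exists_indicator_of_existsUnique (by omega) (by omega) hsing
  refine Subset.antisymm hsub fun e he => ?_
  obtain ⟨x, y, rfl⟩ := mem_bipartiteScopes.1 he
  exact mem_of_lower_bound_of_forall_iff _ hε hsub he (hw _ he)
    (pext_pointAssignment_eq_true_iff h₀₀ h₀₁ h₁₀ h₁₁ x y)
    (hsparse _ (pointAssignment_valid b₀ b₁ c₀ c₁ x y)).1

/-- if `P : D × E → {0,1}` restricted to some `B × C` with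
`|B| = |C| = 2` is a singleton, then the two-sorted complete bipartite instance
on `X ⊔ Y` with `|X| = |Y| = n` has `2n` variables and `n²` constraints, and
every ε-sparsifier of it must keep all `n²` constraints. -/
theorem stmt6 {D E : Type} [Fintype D] [DecidableEq D] [Fintype E] [DecidableEq E]
    (hD : 2 ≤ Fintype.card D) (hE : 2 ≤ Fintype.card E)
    (P : D → E → Bool)
    (B : Finset D) (C : Finset E) (hB : B.card = 2) (hC : C.card = 2)
    (hsing : ∃! p : D × E, p.1 ∈ B ∧ p.2 ∈ C ∧ P p.1 p.2 = true)
    (n : ℕ) (hn : 1 ≤ n)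
    (S : Finset ((Fin n ⊕ Fin n) × (Fin n ⊕ Fin n)))
    (hS : S = (Finset.univ : Finset (Fin n × Fin n)).image
      (fun p => (Sum.inl p.1, Sum.inr p.2)))
    (w : (Fin n ⊕ Fin n) × (Fin n ⊕ Fin n) → ℝ)
    (hw : ∀ e ∈ S, 0 < w e) :
    Fintype.card (Fin n ⊕ Fin n) = 2 * n ∧ S.card = n ^ 2 ∧
    ∀ ε : ℝ, 0 < ε → ε < 1 →
      ∀ (S' : Finset ((Fin n ⊕ Fin n) × (Fin n ⊕ Fin n)))
        (w' : (Fin n ⊕ Fin n) × (Fin n ⊕ Fin n) → ℝ),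
        S' ⊆ S → (∀ e ∈ S', 0 < w' e) →
        (∀ A : (Fin n ⊕ Fin n) → D ⊕ E,
          (∀ e ∈ S, (∃ d, A e.1 = Sum.inl d) ∧ (∃ x, A e.2 = Sum.inr x)) →
          (1 - ε) * cspVal (pext P) S w A ≤ cspVal (pext P) S' w' A ∧
          cspVal (pext P) S' w' A ≤ (1 + ε) * cspVal (pext P) S w A) →
        S' = S :=
  stmt6_general P B C hB hC hsing n S hS w hw
end

section
/- Let [r] = {0,...,r−1} with r ≥ 2, let P : [r]^k → {0,1} be a singleton predicate with support {(a₁,...,a_k)}, and let nOr : [r]^k → {0,1} be the predicate with support {(0,...,0)}. Then for every weighted directed k-uniform hypergraph H on a finite vertex set V and every 0 < ε < 1: if the k-partite k-fold cover γ(H) has an ε-P-sparsifier with g hyperedges, then H has an ε-nOr-sparsifier with g hyperedges. -/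
/-- The value of a `k`-ary CSP instance / weighted directed `k`-uniform
hypergraph with predicate `P`, hyperedge set `E`, weights `w`, under
assignment `A`. -/
def hVal {W D : Type*} {k : ℕ} (P : (Fin k → D) → Bool) (E : Finset (Fin k → W))
    (w : (Fin k → W) → ℝ) (A : W → D) : ℝ :=
  ∑ e ∈ E, w e * (if P (fun i => A (e i)) then 1 else 0)

/-- Hyperedge set of the `k`-partite `k`-fold cover: the hyperedge
`(v₁, …, v_k)` is sent to `(v₁⁽⁰⁾, …, v_k⁽ᵏ⁻¹⁾)`, where `v⁽ⁱ⁾ = (v, i)`. -/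
def coverEdges {W : Type*} [DecidableEq W] {k : ℕ} (E : Finset (Fin k → W)) :
    Finset (Fin k → W × Fin k) :=
  E.image fun e => fun i => (e i, i)

/-- Weights of the `k`-partite `k`-fold cover:
`w^γ(v₁⁽⁰⁾, …, v_k⁽ᵏ⁻¹⁾) = w(v₁, …, v_k)`, and `0` on other tuples. -/
def coverWeight {W : Type*} {k : ℕ} (w : (Fin k → W) → ℝ) :
    (Fin k → W × Fin k) → ℝ :=
  fun f => if ∀ i, (f i).2 = i then w (fun i => (f i).1) else 0

/-!
A hyperedge `e` of `H` corresponds to the hyperedge `i ↦ (e i, i)` of its cover `γ(H)`, and a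
sub-hypergraph of `γ(H)` is the image of a sub-hypergraph of `H`. An assignment `A` of `H` lifts
to the assignment of `γ(H)` sending `(v, i)` to `aᵢ` if `A v = 0` and to some value `≠ aᵢ`
otherwise (this needs `r ≥ 2`); the lifted hyperedge then satisfies `P` exactly when the original
one satisfies `nOr`. Hence every sub-hypergraph of `γ(H)` has the same `P`-value under the lift as
the corresponding sub-hypergraph of `H` has `nOr`-value under `A`, and the sparsifier transfers.
-/

section CoverTuple

variable {W D D' : Type*} {k : ℕ}

def coverTuple (e : Fin k → W) : Fin k → W × Fin k := fun i => (e i, i)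

theorem coverTuple_injective : Function.Injective (coverTuple : (Fin k → W) → Fin k → W × Fin k) :=
  fun _ _ h => funext fun i => congrArg Prod.fst (congrFun h i)

theorem coverEdges_eq_image [DecidableEq W] (E : Finset (Fin k → W)) :
    coverEdges E = E.image coverTuple :=
  rfl

theorem coverWeight_comp_coverTuple (w : (Fin k → W) → ℝ) : coverWeight w ∘ coverTuple = w := by
  funext e
  simp [coverWeight, coverTuple]

theorem hVal_image_coverTuple [DecidableEq W] {P : (Fin k → D') → Bool} {Q : (Fin k → D) → Bool}
    {B : W × Fin k → D'} {A : W → D}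
    (hPQ : ∀ e : Fin k → W, P (fun i => B (e i, i)) = Q (fun i => A (e i)))
    (S : Finset (Fin k → W)) (u : (Fin k → W × Fin k) → ℝ) :
    hVal P (S.image coverTuple) u B = hVal Q S (u ∘ coverTuple) A := by
  rw [hVal, Finset.sum_image fun _ _ _ _ h => coverTuple_injective h]
  exact Finset.sum_congr rfl fun e _ => by simp only [coverTuple, hPQ, Function.comp_apply]

theorem exists_cover_lift_of_singleton [Nontrivial D'] {P : (Fin k → D') → Bool}
    {Q : (Fin k → D) → Bool} {a : Fin k → D'} {c : Fin k → D}
    (hP : ∀ t, P t = true ↔ t = a) (hQ : ∀ t, Q t = true ↔ t = c) (A : W → D) :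
    ∃ B : W × Fin k → D', ∀ e : Fin k → W, P (fun i => B (e i, i)) = Q (fun i => A (e i)) := by
  classical
  choose b hb using fun i => exists_ne (a i)
  refine ⟨fun p => if A p.1 = c p.2 then a p.2 else b p.2, fun e => ?_⟩
  rw [Bool.eq_iff_iff, hP, hQ, funext_iff, funext_iff]
  refine forall_congr' fun i => ?_
  by_cases h : A (e i) = c i <;> simp [h, hb i]

end CoverTuple

theorem exists_sparsifier_of_cover_sparsifier {V D D' : Type*} [DecidableEq V] [Nontrivial D']
    {k : ℕ} {P : (Fin k → D') → Bool} {Q : (Fin k → D) → Bool} {a : Fin k → D'} {c : Fin k → D}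
    (hP : ∀ t, P t = true ↔ t = a) (hQ : ∀ t, Q t = true ↔ t = c)
    (E : Finset (Fin k → V)) (w : (Fin k → V) → ℝ) (ε : ℝ)
    (Eγ : Finset (Fin k → V × Fin k)) (wγ : (Fin k → V × Fin k) → ℝ)
    (hsub : Eγ ⊆ coverEdges E) (hpos : ∀ e ∈ Eγ, 0 < wγ e)
    (hbound : ∀ B : V × Fin k → D',
      (1 - ε) * hVal P (coverEdges E) (coverWeight w) B ≤ hVal P Eγ wγ B ∧
      hVal P Eγ wγ B ≤ (1 + ε) * hVal P (coverEdges E) (coverWeight w) B) :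
    ∃ (Eε : Finset (Fin k → V)) (wε : (Fin k → V) → ℝ),
      Eε ⊆ E ∧ (∀ e ∈ Eε, 0 < wε e) ∧ Eε.card = Eγ.card ∧
      ∀ A : V → D,
        (1 - ε) * hVal Q E w A ≤ hVal Q Eε wε A ∧
        hVal Q Eε wε A ≤ (1 + ε) * hVal Q E w A := by
  obtain ⟨Eε, hEε, rfl⟩ := Finset.subset_image_iff.mp hsub
  refine ⟨Eε, wγ ∘ coverTuple, hEε, fun e he => hpos _ (Finset.mem_image_of_mem _ he),
    (Finset.card_image_of_injective _ coverTuple_injective).symm, fun A => ?_⟩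
  obtain ⟨B, hB⟩ := exists_cover_lift_of_singleton hP hQ A
  have hcover : hVal P (coverEdges E) (coverWeight w) B = hVal Q E w A := by
    rw [coverEdges_eq_image, hVal_image_coverTuple hB, coverWeight_comp_coverTuple]
  rw [← hcover, ← hVal_image_coverTuple hB]
  exact hbound B

theorem stmt12_general {r k : ℕ} (hr : 2 ≤ r)
    (P nOr : (Fin k → Fin r) → Bool) (a : Fin k → Fin r)
    (hP : ∀ t : Fin k → Fin r, P t = true ↔ t = a)
    (hnOr : ∀ t : Fin k → Fin r, nOr t = true ↔ ∀ i, (t i : ℕ) = 0)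
    (V : Type) [DecidableEq V]
    (E : Finset (Fin k → V))
    (w : (Fin k → V) → ℝ)
    (ε : ℝ) (g : ℕ)
    (hsp : ∃ (Eγ : Finset (Fin k → V × Fin k)) (wγ : (Fin k → V × Fin k) → ℝ),
      Eγ ⊆ coverEdges E ∧ (∀ e ∈ Eγ, 0 < wγ e) ∧ Eγ.card = g ∧
      ∀ B : V × Fin k → Fin r,
        (1 - ε) * hVal P (coverEdges E) (coverWeight w) B ≤ hVal P Eγ wγ B ∧
        hVal P Eγ wγ B ≤ (1 + ε) * hVal P (coverEdges E) (coverWeight w) B) :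
    ∃ (Eε : Finset (Fin k → V)) (wε : (Fin k → V) → ℝ),
      Eε ⊆ E ∧ (∀ e ∈ Eε, 0 < wε e) ∧ Eε.card = g ∧
      ∀ A : V → Fin r,
        (1 - ε) * hVal nOr E w A ≤ hVal nOr Eε wε A ∧
        hVal nOr Eε wε A ≤ (1 + ε) * hVal nOr E w A := by
  obtain ⟨Eγ, wγ, hsub, hpos, rfl, hbound⟩ := hsp
  have : Nontrivial (Fin r) := Fin.nontrivial_iff_two_le.mpr hr
  have hnOr_singleton : ∀ t, nOr t = true ↔ t = fun _ => ⟨0, by omega⟩ := fun t => by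
    simp only [hnOr, funext_iff, Fin.ext_iff]
  exact exists_sparsifier_of_cover_sparsifier hP hnOr_singleton E w ε Eγ wγ hsub hpos hbound

/-- let `P : [r]^k → {0,1}` (with `r ≥ 2`) be the singleton
predicate with support `{(a₁, …, a_k)}` and `nOr` the predicate with support
`{(0, …, 0)}`. If the `k`-partite `k`-fold cover `γ(H)` of a weighted directed
`k`-uniform hypergraph `H` has an ε-P-sparsifier with `g` hyperedges, then `H`
has an ε-nOr-sparsifier with `g` hyperedges. -/
theorem stmt12 {r k : ℕ} (hr : 2 ≤ r)
    (P nOr : (Fin k → Fin r) → Bool) (a : Fin k → Fin r)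
    (hP : ∀ t : Fin k → Fin r, P t = true ↔ t = a)
    (hnOr : ∀ t : Fin k → Fin r, nOr t = true ↔ ∀ i, (t i : ℕ) = 0)
    (V : Type) [Fintype V] [DecidableEq V]
    (E : Finset (Fin k → V)) (hE : ∀ e ∈ E, Function.Injective e)
    (w : (Fin k → V) → ℝ) (hw : ∀ e ∈ E, 0 < w e)
    (ε : ℝ) (hε0 : 0 < ε) (hε1 : ε < 1) (g : ℕ)
    (hsp : ∃ (Eγ : Finset (Fin k → V × Fin k)) (wγ : (Fin k → V × Fin k) → ℝ),
      Eγ ⊆ coverEdges E ∧ (∀ e ∈ Eγ, 0 < wγ e) ∧ Eγ.card = g ∧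
      ∀ B : V × Fin k → Fin r,
        (1 - ε) * hVal P (coverEdges E) (coverWeight w) B ≤ hVal P Eγ wγ B ∧
        hVal P Eγ wγ B ≤ (1 + ε) * hVal P (coverEdges E) (coverWeight w) B) :
    ∃ (Eε : Finset (Fin k → V)) (wε : (Fin k → V) → ℝ),
      Eε ⊆ E ∧ (∀ e ∈ Eε, 0 < wε e) ∧ Eε.card = g ∧
      ∀ A : V → Fin r,
        (1 - ε) * hVal nOr E w A ≤ hVal nOr Eε wε A ∧
        hVal nOr Eε wε A ≤ (1 + ε) * hVal nOr E w A :=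
  stmt12_general hr P nOr a hP hnOr V E w ε g hsp
end

section
/- Let D be a finite domain with |D| ≥ 2 and let P : D^k → {0,1} be a k-ary predicate with nonempty support. Suppose there exists a label z ∈ D that appears in no tuple of the support of P (i.e., every tuple (x₁,...,x_k) with P(x₁,...,x_k) = 1 satisfies x_i ≠ z for all i). Then P contains a singleton k-cube. -/
/-- The tuple whose `m`-th coordinate is `d ⟨m⟩ (i ⟨m⟩)` for `m < ℓ`,
and `y m` for `m ≥ ℓ`. -/
def cubeTuple {D : Type*} (k ℓ : ℕ) (d : Fin ℓ → Fin 2 → D) (i : Fin ℓ → Fin 2)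
    (y : Fin k → D) : Fin k → D :=
  fun m => if h : (m : ℕ) < ℓ then d ⟨m, h⟩ (i ⟨m, h⟩) else y m

/-- `P` contains a singleton `ℓ`-cube: there are two-element subdomains
`D_j = {d j 0, d j 1}`, indices `n : Fin ℓ → Fin 2`, and a permutation `σ` of
the `k` coordinate positions such that some completion `x` of the cube vertex
given by `n` lies in the support of `P`, and every tuple of the permuted cube
form lying in the support of `P` must use the indices `n` on the cube
coordinates. -/
def containsSingletonCube {D : Type*} (k ℓ : ℕ) (P : (Fin k → D) → Bool) : Prop :=
  ∃ (d : Fin ℓ → Fin 2 → D) (n : Fin ℓ → Fin 2) (σ : Equiv.Perm (Fin k)),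
    (∀ j, d j 0 ≠ d j 1) ∧
    (∃ x : Fin k → D, P (fun m => cubeTuple k ℓ d n x (σ m)) = true) ∧
    (∀ (y : Fin k → D) (i : Fin ℓ → Fin 2),
      P (fun m => cubeTuple k ℓ d i y (σ m)) = true → i = n)

theorem cubeTuple_self {D : Type*} {k : ℕ} (d : Fin k → Fin 2 → D) (i : Fin k → Fin 2)
    (y : Fin k → D) : cubeTuple k k d i y = fun m => d m (i m) := by
  funext m
  simp [cubeTuple]

theorem stmt16_general {D : Type}
    {k : ℕ} (P : (Fin k → D) → Bool) (hne : ∃ t, P t = true)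
    (z : D) (hz : ∀ t : Fin k → D, P t = true → ∀ i, t i ≠ z) :
    containsSingletonCube k k P := by
  obtain ⟨t, ht⟩ := hne
  -- Take `D_j = {z, t j}`: since the support avoids `z`, its only vertex in the support is `t`.
  refine ⟨fun j => ![z, t j], fun _ => 1, 1, fun j => (hz t ht j).symm, ⟨t, ?_⟩, ?_⟩
  · simpa [cubeTuple_self] using ht
  · intro y i hy
    funext j
    have hj : ![z, t j] (i j) ≠ z := by simpa [cubeTuple_self] using hz _ hy j
    exact Fin.eq_one_of_ne_zero _ fun hij => hj (by simp [hij])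

/-- if `|D| ≥ 2`, `P : D^k → {0,1}` has nonempty support and some
label `z ∈ D` appears in no tuple of the support of `P`, then `P` contains a
singleton `k`-cube. -/
theorem stmt16 {D : Type} [Fintype D] [DecidableEq D] (hD : 2 ≤ Fintype.card D)
    {k : ℕ} (P : (Fin k → D) → Bool) (hne : ∃ t, P t = true)
    (z : D) (hz : ∀ t : Fin k → D, P t = true → ∀ i, t i ≠ z) :
    containsSingletonCube k k P :=
  stmt16_general P hne z hz
end

section
/- Let P : {0,1}³ → {0,1} be the ternary Boolean predicate with support exactly {(0,0,0), (0,0,1)}. Then P contains a singleton 2-cube; consequently, for every integer q ≥ 1 the complete 3-partite 3-uniform hypergraph H on 3q vertices V = V₁ ⊔ V₂ ⊔ V₃ with |V_i| = q and hyperedge set {(u₁,u₂,u₃) : u_i ∈ V_i}, with arbitrary positive weights, has the property that for every 0 < ε < 1 every ε-P-sparsifier H_ε = (V, E_ε, w_ε) of H satisfies |E_ε| ≥ q². -/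
/-!
Label `0` only the vertex `a` of the first part and the vertex `b` of the second: the hyperedges
satisfying `P` are then exactly those through `a` and `b`. They carry positive weight, so every
sparsifier keeps one of them, and the `q²` pairs `(a, b)` force `q²` distinct hyperedges.
-/

open Finset

theorem containsSingletonCube_of_support {k : ℕ} {P : (Fin (k + 2) → Fin 2) → Bool}
    (hP : ∀ t, P t = true ↔ (t 0 = 0 ∧ t 1 = 0)) :
    containsSingletonCube (k + 2) 2 P := by
  refine ⟨fun _ b => b, fun _ => 0, 1, fun _ => zero_ne_one, ⟨fun _ => 0, ?_⟩, ?_⟩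
  · simp [hP, cubeTuple]
  · intro y i h
    obtain ⟨h0, h1⟩ := (hP _).1 h
    simp only [cubeTuple, Equiv.Perm.one_apply] at h0 h1
    funext j
    fin_cases j
    · simpa using h0
    · simpa using h1

section hVal

variable {W D : Type*} {k : ℕ} {P : (Fin k → D) → Bool} {E : Finset (Fin k → W)}
  {w : (Fin k → W) → ℝ} {A : W → D}

theorem exists_mem_of_hVal_pos (h : 0 < hVal P E w A) :
    ∃ e ∈ E, P (fun i => A (e i)) = true := by
  by_contra! hE
  refine h.ne' (sum_eq_zero fun e he => ?_)
  simp [hE e he]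

theorem hVal_pos_of_mem (hw : ∀ e ∈ E, 0 < w e) {e : Fin k → W} (he : e ∈ E)
    (hPe : P (fun i => A (e i)) = true) : 0 < hVal P E w A := by
  refine sum_pos' (fun e' he' => mul_nonneg (hw e' he').le ?_) ⟨e, he, by simp [hPe, hw e he]⟩
  split_ifs <;> norm_num

end hVal

def pairAssignment {q : ℕ} (a b : Fin q) : Fin 3 × Fin q → Fin 2 :=
  fun p => if p = (0, a) ∨ p = (1, b) then 0 else 1

theorem pred_pairAssignment_iff {P : (Fin 3 → Fin 2) → Bool}
    (hP : ∀ t, P t = true ↔ (t 0 = 0 ∧ t 1 = 0)) {q : ℕ} (a b : Fin q) (u : Fin 3 → Fin q) :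
    P (fun i => pairAssignment a b (i, u i)) = true ↔ (u 0 = a ∧ u 1 = b) := by
  simp [hP, pairAssignment]

/-- the ternary Boolean predicate `P` with support exactly
`{(0,0,0), (0,0,1)}` contains a singleton `2`-cube; consequently, for the
complete `3`-partite `3`-uniform hypergraph on `3q` vertices (parts
`V_i = {i} × Fin q`, hyperedges all `(u₁, u₂, u₃)` with `u_i ∈ V_i`, arbitrary
positive weights), every ε-P-sparsifier has at least `q²` hyperedges. -/
theorem stmt17 (P : (Fin 3 → Fin 2) → Bool)
    (hP : ∀ t : Fin 3 → Fin 2, P t = true ↔ (t 0 = 0 ∧ t 1 = 0)) :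
    containsSingletonCube 3 2 P ∧
    ∀ q : ℕ, 1 ≤ q →
      ∀ (E : Finset (Fin 3 → Fin 3 × Fin q)),
        E = Finset.univ.image
          (fun u : Fin 3 → Fin q => fun i : Fin 3 => (i, u i)) →
      ∀ (w : (Fin 3 → Fin 3 × Fin q) → ℝ), (∀ e ∈ E, 0 < w e) →
      ∀ ε : ℝ, 0 < ε → ε < 1 →
      ∀ (Eε : Finset (Fin 3 → Fin 3 × Fin q)) (wε : (Fin 3 → Fin 3 × Fin q) → ℝ),
        Eε ⊆ E → (∀ e ∈ Eε, 0 < wε e) →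
        (∀ A : Fin 3 × Fin q → Fin 2,
          (1 - ε) * hVal P E w A ≤ hVal P Eε wε A ∧
          hVal P Eε wε A ≤ (1 + ε) * hVal P E w A) →
        q ^ 2 ≤ Eε.card := by
  refine ⟨containsSingletonCube_of_support hP, ?_⟩
  intro q _ E hE w hw ε _ hε1 Eε wε hsub _ hspars
  have hcover : Set.SurjOn (fun e => ((e 0).2, (e 1).2)) (Eε : Set (Fin 3 → Fin 3 × Fin q))
      (univ : Finset (Fin q × Fin q)) := by
    rintro ⟨a, b⟩ -
    have hH : 0 < hVal P E w (pairAssignment a b) :=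
      hVal_pos_of_mem hw (hE ▸ mem_image_of_mem _ (mem_univ ![a, b, a]))
        ((pred_pairAssignment_iff hP a b _).2 ⟨rfl, rfl⟩)
    have hHε : 0 < hVal P Eε wε (pairAssignment a b) :=
      (mul_pos (sub_pos.2 hε1) hH).trans_le (hspars _).1
    obtain ⟨e, he, hPe⟩ := exists_mem_of_hVal_pos hHε
    obtain ⟨u, -, rfl⟩ := mem_image.1 (hE ▸ hsub he)
    exact ⟨_, he, by simpa using (pred_pairAssignment_iff hP a b u).1 hPe⟩
  simpa [sq] using card_le_card_of_surjOn _ hcover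
end
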